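/- arXiv:1606.08403 — 6 statements merged into one kernel-verified Lean document; each statement's English description precedes it below -/
import Mathlib

section
/- Let a : Bool → ℕ → ℤ and b : Bool → ℕ → ℤ take values in {−1, 1} (a x n is Alice's outcome at round n on input x, b y n is Bob's outcome at round n on input y). Suppose that for each pair (x, y) the Cesàro averages (1/N) · Σ_{n<N} (a x n) * (b y n) converge to a real number E x y as N → ∞. Then |E false false + E false true + E true false − E true true| ≤ 2. -/
open Filter Finset

/-- Deterministic time-varying local boxes (each party's ±1 outcome at round `n`
    depends only on its own input and `n`) cannot violate the CHSH inequality: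
    if the Cesàro averages of the products converge to `E x y`, then the CHSH
    combination of the `E`'s is bounded by 2 in absolute value. -/
theorem chsh_bound_of_local_deterministic
    (a b : Bool → ℕ → ℤ)
    (ha : ∀ x n, a x n = 1 ∨ a x n = -1)
    (hb : ∀ y n, b y n = 1 ∨ b y n = -1)
    (E : Bool → Bool → ℝ)
    (hE : ∀ x y, Tendsto
      (fun N : ℕ => (1 / (N : ℝ)) * ∑ n ∈ Finset.range N, ((a x n * b y n : ℤ) : ℝ))
      atTop (nhds (E x y))) :
    |E false false + E false true + E true false - E true true| ≤ 2 := by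
  set c : ℕ → ℝ := fun n =>
    ((a false n * b false n : ℤ) : ℝ) + ((a false n * b true n : ℤ) : ℝ)
      + ((a true n * b false n : ℤ) : ℝ) - ((a true n * b true n : ℤ) : ℝ) with hc
  have key : ∀ n, |c n| ≤ 2 := by
    intro n
    rcases ha false n with h1 | h1 <;> rcases ha true n with h2 | h2 <;>
      rcases hb false n with h3 | h3 <;> rcases hb true n with h4 | h4 <;>
      simp [hc, h1, h2, h3, h4] <;> norm_num
  set T : ℕ → ℝ := fun N => (1 / (N : ℝ)) * ∑ n ∈ Finset.range N, c n with hT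
  have hTlim : Tendsto T atTop
      (nhds (E false false + E false true + E true false - E true true)) := by
    have := (((hE false false).add (hE false true)).add (hE true false)).sub (hE true true)
    convert this using 2 with N
    simp only [hT, hc]
    simp only [Finset.sum_sub_distrib, Finset.sum_add_distrib]
    ring
  have hbound : ∀ᶠ N in atTop, |T N| ≤ 2 := by
    filter_upwards [eventually_ge_atTop 1] with N hN
    have hN' : (0 : ℝ) < N := by exact_mod_cast Nat.pos_of_ne_zero (by omega)
    have hsum : |∑ n ∈ Finset.range N, c n| ≤ 2 * N := by
      calc |∑ n ∈ Finset.range N, c n| ≤ ∑ n ∈ Finset.range N, |c n| :=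
            Finset.abs_sum_le_sum_abs _ _
        _ ≤ ∑ n ∈ Finset.range N, 2 := Finset.sum_le_sum fun n _ => key n
        _ = 2 * N := by simp [mul_comm]
    rw [hT]
    simp only [abs_mul, abs_div, abs_one, abs_of_pos hN', one_div]
    rw [abs_inv, abs_of_pos hN', inv_mul_le_iff₀ hN']
    linarith [hsum]
  have h1 : E false false + E false true + E true false - E true true ≤ 2 :=
    le_of_tendsto hTlim (hbound.mono fun N h => (abs_le.mp h).2)
  have h2 : -2 ≤ E false false + E false true + E true false - E true true :=
    ge_of_tendsto hTlim (hbound.mono fun N h => (abs_le.mp h).1)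
  rw [abs_le]; exact ⟨h2, h1⟩
end

section
/- Let A, B : Bool → Bool → ℕ → ℤ take values in {−1, 1} (A x y n is Alice's outcome at round n when Alice's input is x and Bob's input is y; B x y n is Bob's outcome). Suppose there exists m such that for all n ≥ m: A x y n = A x y' n for all x, y, y' and B x y n = B x' y n for all x, x', y (i.e., from round m on, neither output depends on the distant party's input). If for each pair (x, y) the Cesàro averages (1/N) · Σ_{n<N} (A x y n) * (B x y n) converge to E x y, then |E false false + E false true + E true false − E true true| ≤ 2. -/
open Filter Finset

/-- Contrapositive of Lemma 1: if the outputs of deterministic boxes `A, B` depend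
    on the distant party's input in only finitely many rounds (here: in no round
    from `m` on), then the limiting correlations satisfy the CHSH inequality. -/
theorem chsh_bound_of_eventually_no_hidden_signaling
    (A B : Bool → Bool → ℕ → ℤ)
    (hA : ∀ x y n, A x y n = 1 ∨ A x y n = -1)
    (hB : ∀ x y n, B x y n = 1 ∨ B x y n = -1)
    (m : ℕ)
    (hAloc : ∀ n, m ≤ n → ∀ x y y', A x y n = A x y' n)
    (hBloc : ∀ n, m ≤ n → ∀ x x' y, B x y n = B x' y n)
    (E : Bool → Bool → ℝ)
    (hE : ∀ x y, Tendsto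
      (fun N : ℕ => (1 / (N : ℝ)) * ∑ n ∈ Finset.range N, ((A x y n * B x y n : ℤ) : ℝ))
      atTop (nhds (E x y))) :
    |E false false + E false true + E true false - E true true| ≤ 2 := by
  set s : ℕ → ℤ := fun n => A false false n * B false false n + A false true n * B false true n
    + A true false n * B true false n - A true true n * B true true n with hs
  -- per-round bound after m
  have hsm : ∀ n, m ≤ n → |s n| ≤ 2 := by
    intro n hn
    have e1 : A false true n = A false false n := hAloc n hn false true false
    have e2 : A true true n = A true false n := hAloc n hn true true false
    have e3 : B true false n = B false false n := hBloc n hn true false false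
    have e4 : B true true n = B false true n := hBloc n hn true false true
    simp only [hs, e1, e2, e3, e4]
    rcases hA false false n with h1 | h1 <;> rcases hA true false n with h2 | h2 <;>
      rcases hB false false n with h3 | h3 <;> rcases hB false true n with h4 | h4 <;>
      rw [h1, h2, h3, h4] <;> norm_num
  -- per-round bound everywhere
  have hs4 : ∀ n, |s n| ≤ 4 := by
    intro n
    rcases hA false false n with h1 | h1 <;> rcases hA false true n with h2 | h2 <;>
      rcases hA true false n with h3 | h3 <;> rcases hA true true n with h4 | h4 <;>
      rcases hB false false n with g1 | g1 <;> rcases hB false true n with g2 | g2 <;>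
      rcases hB true false n with g3 | g3 <;> rcases hB true true n with g4 | g4 <;>
      simp only [hs, h1, h2, h3, h4, g1, g2, g3, g4] <;> norm_num
  -- partial sum bound
  have hS : ∀ N : ℕ, |∑ n ∈ Finset.range N, s n| ≤ 2 * N + 2 * min N m := by
    intro N
    induction N with
    | zero => simp
    | succ N ih =>
      rw [Finset.sum_range_succ]
      refine (abs_add_le _ _).trans ?_
      rcases le_or_gt m N with hmN | hmN
      · have := hsm N hmN
        have hmin : min (N + 1) m = m := min_eq_right (by omega)
        have hmin' : min N m = m := min_eq_right hmN
        push_cast [hmin, hmin'] at *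
        omega
      · have := hs4 N
        have hmin : min (N + 1) m = N + 1 := min_eq_left (by omega)
        have hmin' : min N m = N := min_eq_left (by omega)
        push_cast [hmin, hmin'] at *
        omega
  -- the combined sequence tends to the CHSH value
  have hL : Tendsto (fun N : ℕ => (1 / (N : ℝ)) * ∑ n ∈ Finset.range N, (s n : ℝ))
      atTop (nhds (E false false + E false true + E true false - E true true)) := by
    have := (((hE false false).add (hE false true)).add (hE true false)).sub (hE true true)
    convert this using 2 with N
    simp only [hs]
    push_cast
    rw [Finset.sum_sub_distrib, Finset.sum_add_distrib, Finset.sum_add_distrib]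
    ring
  -- bound sequence tends to 2
  have hbound : Tendsto (fun N : ℕ => 2 + 2 * (m : ℝ) / N) atTop (nhds 2) := by
    have h0 : Tendsto (fun N : ℕ => 2 * (m : ℝ) / N) atTop (nhds 0) :=
      tendsto_const_div_atTop_nhds_zero_nat _
    simpa using (tendsto_const_nhds.add h0)
  have habs : Tendsto (fun N : ℕ => |(1 / (N : ℝ)) * ∑ n ∈ Finset.range N, (s n : ℝ)|)
      atTop (nhds (|E false false + E false true + E true false - E true true|)) := hL.abs
  refine le_of_tendsto_of_tendsto habs hbound ?_
  filter_upwards [eventually_ge_atTop 1] with N hN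
  have hNpos : (0 : ℝ) < N := by exact_mod_cast hN
  have h1 : |∑ n ∈ Finset.range N, (s n : ℝ)| ≤ 2 * N + 2 * m := by
    have h2 := hS N
    have h3 : (min N m : ℤ) ≤ m := by exact_mod_cast min_le_right N m
    have h4 : |∑ n ∈ Finset.range N, s n| ≤ 2 * N + 2 * m := by omega
    exact_mod_cast h4
  rw [abs_mul, abs_of_nonneg (by positivity : (0:ℝ) ≤ 1 / N)]
  calc (1 / (N:ℝ)) * |∑ n ∈ Finset.range N, (s n : ℝ)|
      ≤ (1 / N) * (2 * N + 2 * m) := by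
        exact mul_le_mul_of_nonneg_left h1 (by positivity)
    _ = 2 + 2 * m / N := by field_simp
end

section
/- Let S : ℕ → Bool be computably unpredictable, and let h, f : ℕ → Bool be computable functions. If the set {n | S n = true ∧ h n ≠ f n} is finite, then the set {n | h n ≠ f n} is finite. In words: if two computable functions agree on all but finitely many positions of a computably unpredictable set, they agree on all but finitely many positions overall. -/
def ComputablyUnpredictable {α : Type*} (S : ℕ → α) : Prop :=
  ∀ Γ : Set α, Γ.Nonempty → Γ ≠ Set.univ →
    ∀ g : ℕ → Bool, Computable g → {n | g n = true}.Infinite →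
      {n | g n = true ∧ S n ∈ Γ}.Infinite

theorem ComputablyUnpredictable.finite_of_finite_and_apply_eq {α : Type*}
    [Nontrivial α] {S : ℕ → α} (hS : ComputablyUnpredictable S) (a : α) {g : ℕ → Bool}
    (hg : Computable g) (hfin : {n | g n = true ∧ S n = a}.Finite) :
    {n | g n = true}.Finite := by
  by_contra hinf
  exact hS {a} (Set.singleton_nonempty a) (Set.singleton_ne_univ a) g hg hinf hfin

theorem Computable.bne {α β : Type*} [Primcodable α] [Primcodable β] [DecidableEq α]
    {h f : β → α}
    (hh : Computable h) (hf : Computable f) : Computable fun n => h n != f n :=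
  Primrec.not.to_comp.comp (Primrec.beq.to_comp.comp hh hf)

/-- If `S : ℕ → Bool` is computably unpredictable and two computable functions
    `h, f` agree on all but finitely many positions `n` with `S n = true`, then
    they agree on all but finitely many positions overall. -/
theorem agree_of_agree_on_unpredictable
    (S : ℕ → Bool)
    (hS : ∀ Γ : Set Bool, Γ.Nonempty → Γ ≠ Set.univ →
      ∀ g : ℕ → Bool, Computable g → {n | g n = true}.Infinite →
        {n | g n = true ∧ S n ∈ Γ}.Infinite)
    (h f : ℕ → Bool) (hh : Computable h) (hf : Computable f)
    (hfin : {n | S n = true ∧ h n ≠ f n}.Finite) :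
    {n | h n ≠ f n}.Finite := by
  have hS' : ComputablyUnpredictable S := hS
  have hfin' : {n | (h n != f n) = true ∧ S n = true}.Finite := by
    simpa only [bne_iff_ne, and_comm] using hfin
  simpa only [bne_iff_ne] using
    hS'.finite_of_finite_and_apply_eq true (hh.bne hf) hfin'
end

section
/- Let k ≥ 2 and equip the space of sequences ℕ → Fin k with the infinite product of the uniform probability measure on Fin k. Then the set of sequences S : ℕ → Fin k that are computably unpredictable has measure 1, i.e., almost every sequence S satisfies: for every nonempty proper subset Γ of Fin k and every computable g : ℕ → Bool with {n | g n = true} infinite, the set {n | g n = true ∧ S n ∈ Γ} is infinite. -/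
/-! For fixed `Γ ∋ a` and fixed `g` with infinitely many `true` values, the events `S n ∈ Γ`
along the `n` with `g n = true` are independent and each has probability at least
`μ {S n = a} = 1/k`, so by the second Borel–Cantelli lemma almost surely infinitely many of them
occur. There are finitely many `Γ` and only countably many computable `g`. -/

open MeasureTheory ProbabilityTheory Filter
open scoped ENNReal

theorem Computable.countable_setOf_nat_fun (β : Type*) [Primcodable β] :
    {g : ℕ → β | Computable g}.Countable := by
  let encodeFun (g : {g : ℕ → β // Computable g}) : {f : ℕ → ℕ // Computable f} :=
    ⟨fun n => Encodable.encode (g.1 n), Computable.encode.comp g.2⟩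
  have hinj : Function.Injective encodeFun := fun g₁ g₂ h =>
    Subtype.ext <| funext fun n => Encodable.encode_injective (congrFun (congrArg Subtype.val h) n)
  exact Set.countable_coe_iff.mp hinj.countable

namespace ProbabilityTheory

variable {Ω : Type*} [MeasurableSpace Ω] {μ : Measure Ω}

theorem iIndepFun.iIndepSet_preimage {ι β : Type*} [MeasurableSpace β]
    {X : ι → Ω → β} (hX : iIndepFun X μ) (hXm : ∀ i, Measurable (X i)) {Γ : Set β}
    (hΓ : MeasurableSet Γ) : iIndepSet (fun i => X i ⁻¹' Γ) μ :=
  (iIndepSet_iff_meas_biInter fun i => hXm i hΓ).2 fun s =>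
    iIndepFun_iff_measure_inter_preimage_eq_mul.1 hX s fun _ _ => hΓ

theorem iIndepSet.ae_infinite_setOf_mem {s : ℕ → Set Ω}
    (hsm : ∀ n, MeasurableSet (s n)) (hs : iIndepSet s μ) (hsum : ∑' n, μ (s n) = ∞) :
    ∀ᵐ ω ∂μ, {n | ω ∈ s n}.Infinite := by
  have := hs.isProbabilityMeasure
  have hlimsup : limsup s atTop ∈ ae μ :=
    mem_ae_iff.2 <| (prob_compl_eq_zero_iff (MeasurableSet.measurableSet_limsup hsm)).2 <|
      measure_limsup_eq_one hsm hs hsum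
  filter_upwards [hlimsup] with ω hω
  exact Nat.frequently_atTop_iff_infinite.1 (mem_limsup_iff_frequently_mem.1 hω)

theorem iIndepSet.ae_infinite_setOf_mem_of_le_measure {s : ℕ → Set Ω}
    (hsm : ∀ n, MeasurableSet (s n)) (hs : iIndepSet s μ) {I : Set ℕ} (hI : I.Infinite)
    {c : ℝ≥0∞} (hc : c ≠ 0) (hcs : ∀ n ∈ I, c ≤ μ (s n)) :
    ∀ᵐ ω ∂μ, {n | n ∈ I ∧ ω ∈ s n}.Infinite := by
  set e := Nat.nth (· ∈ I)
  have he : Function.Injective e := Nat.nth_injective hI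
  have heI (m : ℕ) : e m ∈ I := Nat.nth_mem_of_infinite hI m
  have hsum : ∑' m, μ (s (e m)) = ∞ :=
    top_le_iff.1 <| (ENNReal.tsum_const_eq_top_of_ne_zero hc).symm.trans_le <|
      ENNReal.tsum_le_tsum fun m => hcs _ (heI m)
  filter_upwards [(hs.precomp he).ae_infinite_setOf_mem (fun m => hsm (e m)) hsum] with ω hω
  refine (hω.image he.injOn).mono ?_
  rintro _ ⟨m, hm, rfl⟩
  exact ⟨heI m, hm⟩

end ProbabilityTheory

theorem ae_computably_unpredictable_general (k : ℕ)
    (μ : Measure (ℕ → Fin k)) [IsProbabilityMeasure μ]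
    (h_indep : iIndepFun (fun n (S : ℕ → Fin k) => S n) μ)
    (h_unif : ∀ (n : ℕ) (a : Fin k), μ {S | S n = a} = ((k : ENNReal))⁻¹) :
    μ {S : ℕ → Fin k |
        ∀ Γ : Set (Fin k), Γ.Nonempty → Γ ≠ Set.univ →
          ∀ g : ℕ → Bool, Computable g → {n | g n = true}.Infinite →
            {n | g n = true ∧ S n ∈ Γ}.Infinite} = 1 := by
  have hfixed : ∀ Γ : Set (Fin k), Γ.Nonempty → ∀ g : ℕ → Bool, {n | g n = true}.Infinite →
      ∀ᵐ S ∂μ, {n | g n = true ∧ S n ∈ Γ}.Infinite := by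
    rintro Γ ⟨a, ha⟩ g hg
    have hΓ_indep : iIndepSet (fun n => {S : ℕ → Fin k | S n ∈ Γ}) μ :=
      h_indep.iIndepSet_preimage (fun n => measurable_pi_apply n) .of_discrete
    refine hΓ_indep.ae_infinite_setOf_mem_of_le_measure
      (fun n => measurable_pi_apply n .of_discrete) hg
      (ENNReal.inv_ne_zero.2 (ENNReal.natCast_ne_top k)) fun n _ => ?_
    rw [← h_unif n a]
    exact measure_mono fun S (hS : S n = a) => show S n ∈ Γ from hS ▸ ha
  have hgood : ∀ᵐ S ∂μ, ∀ Γ : Set (Fin k), Γ.Nonempty → ∀ g ∈ {g : ℕ → Bool | Computable g},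
      {n | g n = true}.Infinite → {n | g n = true ∧ S n ∈ Γ}.Infinite :=
    ae_all_iff.2 fun Γ => eventually_imp_distrib_left.2 fun hΓ =>
      (ae_ball_iff (Computable.countable_setOf_nat_fun Bool)).2 fun g _ =>
        eventually_imp_distrib_left.2 (hfixed Γ hΓ g)
  refine (measure_congr (ae_eq_univ.2 (ae_iff.1 ?_))).trans measure_univ
  filter_upwards [hgood] with S hS Γ hΓ _ g hg hinf using hS Γ hΓ g hg hinf

/-- Almost every sequence of independent uniform symbols is computably
    unpredictable.  The infinite product of the uniform probability measure on
    `Fin k` is characterized as a probability measure `μ` on `ℕ → Fin k` whose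
    coordinate maps are independent and uniformly distributed. -/
theorem ae_computably_unpredictable (k : ℕ) (hk : 2 ≤ k)
    (μ : Measure (ℕ → Fin k)) [IsProbabilityMeasure μ]
    (h_indep : iIndepFun (fun n (S : ℕ → Fin k) => S n) μ)
    (h_unif : ∀ (n : ℕ) (a : Fin k), μ {S | S n = a} = ((k : ENNReal))⁻¹) :
    μ {S : ℕ → Fin k |
        ∀ Γ : Set (Fin k), Γ.Nonempty → Γ ≠ Set.univ →
          ∀ g : ℕ → Bool, Computable g → {n | g n = true}.Infinite →
            {n | g n = true ∧ S n ∈ Γ}.Infinite} = 1 :=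
  ae_computably_unpredictable_general k μ h_indep h_unif
end

section
/- Let m ≥ 1 and let the alphabet be α = (Bool × Bool) ⊕ Fin m. Let S : ℕ → α be computably unpredictable. Let B : Bool → Bool → ℕ → Bool be such that the uncurried map (x, y, n) ↦ B x y n is computable, and suppose the set {n | ∃ y, B false y n ≠ B true y n} is infinite (Bob's output depends on Alice's input for infinitely many rounds). Then for every i : Fin m, the set {n | S n = Sum.inr i ∧ ∃ y, B false y n ≠ B true y n} is infinite. -/
/-- Analogue of Lemma 3 (property P2): if the switching sequence `S` is computably
    unpredictable, the box function `B` is computable, and `B`'s output depends on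
    Alice's input for infinitely many rounds, then for every bit position `i` of
    Alice's message there are infinitely many signaling rounds for bit `i` at
    which the hidden dependence is present. -/
theorem signaling_rounds_infinite (m : ℕ) (hm : 1 ≤ m)
    (S : ℕ → (Bool × Bool) ⊕ Fin m)
    (hS : ∀ Γ : Set ((Bool × Bool) ⊕ Fin m), Γ.Nonempty → Γ ≠ Set.univ →
      ∀ g : ℕ → Bool, Computable g → {n | g n = true}.Infinite →
        {n | g n = true ∧ S n ∈ Γ}.Infinite)
    (B : Bool → Bool → ℕ → Bool)
    (hB : Computable (fun p : Bool × Bool × ℕ => B p.1 p.2.1 p.2.2))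
    (hdep : {n : ℕ | ∃ y : Bool, B false y n ≠ B true y n}.Infinite) :
    ∀ i : Fin m,
      {n : ℕ | S n = Sum.inr i ∧ ∃ y : Bool, B false y n ≠ B true y n}.Infinite := by
  intro i
  set g : ℕ → Bool := fun n =>
    (B false false n != B true false n) || (B false true n != B true true n) with hg
  have hBc : ∀ x y : Bool, Computable (fun n => B x y n) := fun x y =>
    hB.comp (Computable.const x |>.pair ((Computable.const y).pair Computable.id))
  have hne : ∀ x y : Bool, Computable (fun n => B false x n != B true y n) := fun x y =>
    Primrec.not.to_comp.comp (Primrec.beq.to_comp.comp (hBc false x) (hBc true y))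
  have hgc : Computable g := Primrec.or.to_comp.comp (hne false false) (hne true true)
  have hgset : {n | g n = true} = {n : ℕ | ∃ y : Bool, B false y n ≠ B true y n} := by
    ext n
    simp only [Set.mem_setOf_eq, hg, Bool.or_eq_true, bne_iff_ne]
    constructor
    · rintro (h | h) <;> exact ⟨_, h⟩
    · rintro ⟨y, h⟩; cases y
      · exact Or.inl h
      · exact Or.inr h
  have h := hS {Sum.inr i} ⟨_, rfl⟩ (by
      intro h
      have : (Sum.inl (false, false) : (Bool × Bool) ⊕ Fin m) ∈ ({Sum.inr i} : Set _) := by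
        rw [h]; trivial
      simp at this)
    g hgc (hgset ▸ hdep)
  have : {n | g n = true ∧ S n ∈ ({Sum.inr i} : Set _)} ⊆
      {n : ℕ | S n = Sum.inr i ∧ ∃ y : Bool, B false y n ≠ B true y n} := by
    intro n ⟨h1, h2⟩
    refine ⟨h2, ?_⟩
    have : n ∈ {n | g n = true} := h1
    rw [hgset] at this
    exact this
  exact h.mono this
end

section
/- Let m ≥ 1, α = (Bool × Bool) ⊕ Fin m, and let S : ℕ → α be computably unpredictable. Let B : Bool → Bool → ℕ → Bool with the uncurried map computable and with {n | ∃ y, B false y n ≠ B true y n} infinite. Let s : ℕ → Bool → Bool → ℕ → Bool with the uncurried map computable and with s i₀ = B for some i₀. Define the learner G : ℕ → ℕ by letting G n be the least index i such that for all j < n, if S j = Sum.inl (x, y) then s i x y j = B x y j. Then there exists an index i such that G converges to i and, for every bit position p : Fin m, the set of rounds n with S n = Sum.inr p at which there exists y ∈ Bool with s i false y n ≠ s i true y n and s i x y n = B x y n for both x ∈ Bool, is infinite. In other words, for each bit of Alice's message there are infinitely many signaling rounds at which Bob, using his converged guess s i, can choose an input y whose (correctly predicted) output reveals Alice's input. 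-/
private lemma comp_not {f : ℕ → Bool} (hf : Computable f) :
    Computable fun n => !(f n) :=
  (Computable.cond hf (Computable.const false) (Computable.const true)).of_eq
    fun n => by cases f n <;> rfl

private lemma comp_and {f g : ℕ → Bool} (hf : Computable f) (hg : Computable g) :
    Computable fun n => f n && g n :=
  (Computable.cond hf hg (Computable.const false)).of_eq
    fun n => by cases f n <;> cases g n <;> rfl

private lemma comp_or {f g : ℕ → Bool} (hf : Computable f) (hg : Computable g) :
    Computable fun n => f n || g n :=
  (Computable.cond hf (Computable.const true) hg).of_eq
    fun n => by cases f n <;> cases g n <;> rfl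

private lemma comp_xor {f g : ℕ → Bool} (hf : Computable f) (hg : Computable g) :
    Computable fun n => xor (f n) (g n) :=
  (Computable.cond hf (comp_not hg) hg).of_eq
    fun n => by cases f n <;> cases g n <;> rfl

private lemma comp_beq {f g : ℕ → Bool} (hf : Computable f) (hg : Computable g) :
    Computable fun n => f n == g n :=
  (Computable.cond hf hg (comp_not hg)).of_eq
    fun n => by cases f n <;> cases g n <;> rfl

/-- Soundness of the signaling protocol: with a computably unpredictable switching
    sequence `S`, a computable box function `B` (occurring in the computable
    enumeration `s`) exhibiting hidden dependence on Alice's input infinitely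
    often, the enumeration learner `G` converges to an index `i` such that, for
    every bit position `p` of Alice's `m`-bit message, there are infinitely many
    signaling rounds `n` for bit `p` at which some input `y` of Bob satisfies
    `s i false y n ≠ s i true y n` while `s i` correctly predicts `B` at `(x, y, n)`
    for both `x` — so Bob can read off Alice's input. -/
theorem signaling_protocol_sound (m : ℕ) (hm : 1 ≤ m)
    (S : ℕ → (Bool × Bool) ⊕ Fin m)
    (hS : ∀ Γ : Set ((Bool × Bool) ⊕ Fin m), Γ.Nonempty → Γ ≠ Set.univ →
      ∀ g : ℕ → Bool, Computable g → {n | g n = true}.Infinite →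
        {n | g n = true ∧ S n ∈ Γ}.Infinite)
    (B : Bool → Bool → ℕ → Bool)
    (hB : Computable (fun p : Bool × Bool × ℕ => B p.1 p.2.1 p.2.2))
    (hdep : {n : ℕ | ∃ y : Bool, B false y n ≠ B true y n}.Infinite)
    (s : ℕ → Bool → Bool → ℕ → Bool)
    (hs : Computable (fun p : ℕ × Bool × Bool × ℕ => s p.1 p.2.1 p.2.2.1 p.2.2.2))
    (hs0 : ∃ i₀, s i₀ = B)
    (G : ℕ → ℕ)
    (hG : ∀ n, IsLeast
      {i : ℕ | ∀ j < n, ∀ x y : Bool, S j = Sum.inl (x, y) → s i x y j = B x y j}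
      (G n)) :
    ∃ i : ℕ, (∃ N, ∀ n, N ≤ n → G n = i) ∧
      ∀ p : Fin m,
        {n : ℕ | S n = Sum.inr p ∧ ∃ y : Bool,
          s i false y n ≠ s i true y n ∧ ∀ x : Bool, s i x y n = B x y n}.Infinite := by
  obtain ⟨i₀, hi₀⟩ := hs0
  have hub : ∀ n, G n ≤ i₀ := fun n =>
    (hG n).2 (fun j _ x y _ => by rw [hi₀])
  have hmono : Monotone G := monotone_nat_of_le_succ fun n =>
    (hG n).2 (fun j hj x y hxy => (hG (n + 1)).1 j (Nat.lt_succ_of_lt hj) x y hxy)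
  have hbdd : BddAbove (Set.range G) := ⟨i₀, by rintro _ ⟨n, rfl⟩; exact hub n⟩
  obtain ⟨N, hN⟩ := Nat.sSup_mem (Set.range_nonempty G) hbdd
  set i := sSup (Set.range G) with hi
  have hconv : ∀ n, N ≤ n → G n = i := fun n hn =>
    le_antisymm (le_csSup hbdd ⟨n, rfl⟩) (hN ▸ hmono hn)
  have hlearn : ∀ j x y, S j = Sum.inl (x, y) → s i x y j = B x y j := by
    intro j x y hxy
    have h := (hG (max N (j + 1))).1
    rw [hconv (max N (j + 1)) (le_max_left _ _)] at h
    exact h j (lt_of_lt_of_le (Nat.lt_succ_self j) (le_max_right _ _)) x y hxy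
  -- computability of sections
  have hsixy : ∀ x y : Bool, Computable fun n => s i x y n := fun x y =>
    hs.comp ((Computable.const i).pair
      ((Computable.const x).pair ((Computable.const y).pair Computable.id)))
  have hBxy : ∀ x y : Bool, Computable fun n => B x y n := fun x y =>
    hB.comp ((Computable.const x).pair ((Computable.const y).pair Computable.id))
  -- step: each disagreement set is finite
  have hfin : ∀ x y : Bool, {n | s i x y n ≠ B x y n}.Finite := by
    intro x y
    by_contra hcon
    have hinf : {n | s i x y n ≠ B x y n}.Infinite := hcon
    set g : ℕ → Bool := fun n => xor (s i x y n) (B x y n) with hgdef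
    have hg : Computable g := comp_xor (hsixy x y) (hBxy x y)
    have hgset : {n | g n = true} = {n | s i x y n ≠ B x y n} := by
      ext n
      simp only [hgdef, Set.mem_setOf_eq]
      cases h1 : s i x y n <;> cases h2 : B x y n <;> simp
    have hΓ : ({Sum.inl (x, y)} : Set ((Bool × Bool) ⊕ Fin m)) ≠ Set.univ := by
      intro h
      have : (Sum.inr ⟨0, hm⟩ : (Bool × Bool) ⊕ Fin m) ∈
          ({Sum.inl (x, y)} : Set ((Bool × Bool) ⊕ Fin m)) := h ▸ Set.mem_univ _
      simp at this
    obtain ⟨n, hn1, hn2⟩ :=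
      (hS {Sum.inl (x, y)} ⟨_, rfl⟩ hΓ g hg (hgset ▸ hinf)).nonempty
    have hne : s i x y n ≠ B x y n := by
      have : n ∈ {n | g n = true} := hn1
      rwa [hgset] at this
    exact hne (hlearn n x y hn2)
  refine ⟨i, ⟨N, hconv⟩, ?_⟩
  intro p
  -- finite global disagreement set
  have hF : {n | ∃ x y : Bool, s i x y n ≠ B x y n}.Finite := by
    apply Set.Finite.subset
      (((hfin false false).union (hfin false true)).union
        ((hfin true false).union (hfin true true)))
    rintro n ⟨x, y, h⟩
    cases x <;> cases y <;> simp [h]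
  set g : ℕ → Bool := fun n =>
    ((xor (s i false false n) (s i true false n)) &&
      ((s i false false n == B false false n) && (s i true false n == B true false n))) ||
    ((xor (s i false true n) (s i true true n)) &&
      ((s i false true n == B false true n) && (s i true true n == B true true n))) with hgdef
  have hg : Computable g := by
    apply comp_or
    · exact comp_and (comp_xor (hsixy false false) (hsixy true false))
        (comp_and (comp_beq (hsixy false false) (hBxy false false))
          (comp_beq (hsixy true false) (hBxy true false)))
    · exact comp_and (comp_xor (hsixy false true) (hsixy true true))
        (comp_and (comp_beq (hsixy false true) (hBxy false true))
          (comp_beq (hsixy true true) (hBxy true true)))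
  have hgiff : ∀ n, g n = true ↔
      ∃ y : Bool, s i false y n ≠ s i true y n ∧ ∀ x : Bool, s i x y n = B x y n := by
    intro n
    simp only [hgdef, Bool.exists_bool, Bool.forall_bool]
    generalize s i false false n = a0
    generalize s i true false n = a1
    generalize B false false n = b0
    generalize B true false n = b1
    generalize s i false true n = a2
    generalize s i true true n = a3
    generalize B false true n = b2
    generalize B true true n = b3
    revert a0 a1 b0 b1 a2 a3 b2 b3
    decide
  have hAinf : {n | g n = true}.Infinite := by
    apply Set.Infinite.mono _ (hdep.diff hF)
    rintro n ⟨⟨y, hy⟩, hn2⟩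
    have hcorr : ∀ x y : Bool, s i x y n = B x y n := by
      intro x y; by_contra h; exact hn2 ⟨x, y, h⟩
    show g n = true
    rw [hgiff]
    exact ⟨y, by rw [hcorr false y, hcorr true y]; exact hy, fun x => hcorr x y⟩
  have hΓ : ({Sum.inr p} : Set ((Bool × Bool) ⊕ Fin m)) ≠ Set.univ := by
    intro h
    have : (Sum.inl (false, false) : (Bool × Bool) ⊕ Fin m) ∈
        ({Sum.inr p} : Set ((Bool × Bool) ⊕ Fin m)) := h ▸ Set.mem_univ _
    simp at this
  apply Set.Infinite.mono _ (hS {Sum.inr p} ⟨_, rfl⟩ hΓ g hg hAinf)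
  rintro n ⟨hn1, hn2⟩
  exact ⟨hn2, (hgiff n).1 hn1⟩
end
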